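/- Let G' be a connected graph and x, v vertices of G' with N_{G'}[x] ⊆ N_{G'}[v]. Let T be a search tree on G' − x. Then the search trees T(0,x,v), T(1,x,v), …, T(d_{T,v},x,v) lie on a path in the rotation graph R(G'); that is, consecutive trees T(i,x,v) and T(i+1,x,v) differ by a single rotation. -/

import Mathlib

/-!
A search tree is the same as a rooted tree in which every subtree induces a connected subgraph
and every edge of the graph joins an ancestor to a descendant. In this form insertion is easy to
control: putting `x` directly above a vertex `a` of the root-to-`v` path enlarges each subtree
containing `x` by a vertex adjacent to `v`, and since `N[x] ⊆ N[v]` every neighbour of `x` is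
comparable with `v`, hence with `x` in the new tree. Moreover `T(i,x,v)` arises from
`T(i+1,x,v)` by rotating the edge between `x` and its parent `a_i`: the single child subtree of
`x` is `T|a_{i+1}`, which contains a neighbour of `a_i` and is therefore handed over to `a_i`.
-/

open scoped Classical

universe u

variable {V : Type u}

/-- A rooted tree structure on a support set: data only, well-formedness is `RTree.WF`. -/
structure RTree (V : Type u) where
  supp : Set V
  root : V
  parent : V → Option V

namespace RTree

def parentRel (T : RTree V) (a b : V) : Prop := T.parent a = some b

/-- `u` is an ancestor of `v` in `T` (reflexively). -/
def isAncestor (T : RTree V) (u v : V) : Prop :=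
  Relation.ReflTransGen T.parentRel v u

def WF (T : RTree V) : Prop :=
  T.root ∈ T.supp ∧
  T.parent T.root = none ∧
  (∀ v, v ∉ T.supp → T.parent v = none) ∧
  (∀ v ∈ T.supp, v ≠ T.root → ∃ u ∈ T.supp, T.parent v = some u) ∧
  (∀ v ∈ T.supp, T.isAncestor T.root v)

/-- The vertex set of the subtree `T|c` rooted at `c`. -/
def descendants (T : RTree V) (c : V) : Set V :=
  {v | v ∈ T.supp ∧ T.isAncestor c v}

/-- Iterated parent. -/
def pIter (T : RTree V) : ℕ → V → Option V
  | 0, w => some w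
  | n + 1, w => (T.parent w).bind (T.pIter n)

/-- The depth `d_{T,v}` of `v` in `T` (distance to the root). -/
noncomputable def depthOf (T : RTree V) (v : V) : ℕ :=
  sInf {n | T.pIter n v = some T.root}

/-- The subtree of `T` rooted at `c`. -/
noncomputable def subtreeAt (T : RTree V) (c : V) : RTree V where
  supp := T.descendants c
  root := c
  parent := fun w => if w = c then none else if w ∈ T.descendants c then T.parent w else none

/-- The vertex at depth `i` on the path from the root to `v`. -/
noncomputable def ancAt (T : RTree V) (v : V) (i : ℕ) : V :=
  (T.pIter (T.depthOf v - i) v).getD T.root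

/-- Insertion `T(i,x,v)` of a new vertex `x` at depth `i` along the root-to-`v` path:
`i = 0` makes `x` the new root, `i = d_{T,v}+1` adds `x` as a new child of `v`, and
for `1 ≤ i ≤ d_{T,v}` the `i`-th edge of the root-to-`v` path is subdivided by `x`. -/
noncomputable def insertAt (T : RTree V) (i : ℕ) (x v : V) : RTree V :=
  if i = 0 then
    { supp := insert x T.supp
      root := x
      parent := fun w => if w = x then none else if w = T.root then some x else T.parent w }
  else if i = T.depthOf v + 1 then
    { supp := insert x T.supp
      root := T.root
      parent := fun w => if w = x then some v else T.parent w }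
  else
    { supp := insert x T.supp
      root := T.root
      parent := fun w =>
        if w = x then some (T.ancAt v (i - 1))
        else if w = T.ancAt v i then some x
        else T.parent w }

/-- Elimination `p(T,x)` of a vertex `x` (meaningful when `x` has at most one child). -/
noncomputable def elim (T : RTree V) (x : V) : RTree V where
  supp := T.supp \ {x}
  root :=
    if T.root = x then (if h : ∃ w, T.parent w = some x then h.choose else T.root) else T.root
  parent := fun w =>
    if w = x then none
    else if T.parent w = some x then T.parent x
    else T.parent w

end RTree

/-- Reachability inside the vertex set `s`, i.e. in the induced subgraph `G[s]`. -/
def reachWithin (G : SimpleGraph V) (s : Set V) : V → V → Prop :=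
  Relation.ReflTransGen (fun a b => a ∈ s ∧ b ∈ s ∧ G.Adj a b)

/-- Recursive definition of a search tree: the children of the root are the roots of
search trees on the connected components of the graph minus the root. -/
inductive IsSearchTreeRec {V : Type u} (G : SimpleGraph V) : RTree V → Prop
  | intro (T : RTree V) (hwf : T.WF)
      (hconn : ∀ a ∈ T.supp, ∀ b ∈ T.supp, reachWithin G T.supp a b)
      (hcomp : ∀ c, T.parent c = some T.root →
        ∀ w, w ∈ T.descendants c ↔
          (w ∈ T.supp ∧ w ≠ T.root ∧ reachWithin G (T.supp \ {T.root}) c w))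
      (hrec : ∀ c, T.parent c = some T.root → IsSearchTreeRec G (T.subtreeAt c)) :
      IsSearchTreeRec G T

/-- `T` is a search tree on the induced subgraph `G[s]`. -/
def IsSearchTreeOn (G : SimpleGraph V) (s : Set V) (T : RTree V) : Prop :=
  T.supp = s ∧ IsSearchTreeRec G T

/-- `T` is a search tree on `G`. -/
def IsSearchTree (G : SimpleGraph V) (T : RTree V) : Prop :=
  IsSearchTreeOn G Set.univ T

/-- The `uv`-rotation of `T` (for `v` a child of `u`): `u` becomes a child of `v`, `v` takes
`u`'s old parent, and each subtree `S` of `v` is reattached below `u` iff `u` has a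
`G`-neighbour in `S`. -/
noncomputable def rotate (G : SimpleGraph V) (T : RTree V) (u v : V) : RTree V where
  supp := T.supp
  root := if T.root = u then v else T.root
  parent := fun w =>
    if w = v then T.parent u
    else if w = u then some v
    else if T.parent w = some v then
      (if ∃ z ∈ T.descendants w, G.Adj u z then some u else some v)
    else T.parent w

def IsRotation (G : SimpleGraph V) (S S' : RTree V) : Prop :=
  ∃ u v, S.parent v = some u ∧ S' = rotate G S u v

def rotAdj (G : SimpleGraph V) (S S' : RTree V) : Prop :=
  S ≠ S' ∧ (IsRotation G S S' ∨ IsRotation G S' S)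

/-- The rotation graph of the induced subgraph `G[s]`: vertices are the search trees on
`G[s]`, two trees being adjacent iff they differ by a single rotation. -/
def rotationGraphOn (G : SimpleGraph V) (s : Set V) :
    SimpleGraph {T : RTree V // IsSearchTreeOn G s T} where
  Adj T T' := rotAdj G T.1 T'.1
  symm := ⟨fun T T' h => ⟨Ne.symm h.1, Or.symm h.2⟩⟩
  loopless := ⟨fun T h => h.1 rfl⟩

/-- A vertex of `K` of maximal depth in `T` (the vertex `v_{λ(T)}`). -/
noncomputable def deepestIn (T : RTree V) (K : Set V) : V :=
  if h : ∃ u, u ∈ K ∧ ∀ w ∈ K, T.depthOf w ≤ T.depthOf u then h.choose else T.root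

/-- `u` and `v` have different relative order in `T` and `T'`. -/
def diffRelOrder (T T' : RTree V) (u v : V) : Prop :=
  (T.isAncestor u v ∧ ¬ T'.isAncestor u v) ∨ (¬ T.isAncestor u v ∧ T'.isAncestor u v)

/-- The step from `S` to `S'` is a rotation of the pair `u`, `v`. -/
def isUVStep (G : SimpleGraph V) (u v : V) (S S' : RTree V) : Prop :=
  (S.parent v = some u ∧ S' = rotate G S u v) ∨ (S.parent u = some v ∧ S' = rotate G S v u)

/-- A threshold graph: obtainable from the one-vertex graph by repeatedly adding either an
isolated vertex or a universal vertex. -/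
def IsThresholdGraph {V : Type u} [Fintype V] (G : SimpleGraph V) : Prop :=
  ∃ e : Fin (Fintype.card V) ≃ V,
    ∀ i : Fin (Fintype.card V),
      (∀ j, j < i → ¬ G.Adj (e i) (e j)) ∨ (∀ j, j < i → G.Adj (e i) (e j))

/-- The complete split graph `SPK_{p,q}`: a clique of size `p` completely joined to an
independent set of size `q`. -/
def completeSplitGraph (p q : ℕ) : SimpleGraph (Fin p ⊕ Fin q) where
  Adj a b := a ≠ b ∧ (a.isLeft = true ∨ b.isLeft = true)
  symm := ⟨fun a b h => ⟨Ne.symm h.1, Or.symm h.2⟩⟩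
  loopless := ⟨fun a h => h.1 rfl⟩

section Reach

variable {G : SimpleGraph V} {s d : Set V} {a b y z : V}

theorem reachWithin.mono {t : Set V} (hst : s ⊆ t) (h : reachWithin G s a b) :
    reachWithin G t a b :=
  Relation.ReflTransGen.mono (fun _ _ h => ⟨hst h.1, hst h.2.1, h.2.2⟩) _ _ h

theorem reachWithin.symm (h : reachWithin G s a b) : reachWithin G s b a := by
  induction h with
  | refl => exact .refl
  | tail _ hstep ih => exact ih.head ⟨hstep.2.1, hstep.1, hstep.2.2.symm⟩

theorem reachWithin.mem_of_closed (hd : ∀ z ∈ d, ∀ y ∈ s, G.Adj z y → y ∈ d)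
    (ha : a ∈ d) (h : reachWithin G s a b) : b ∈ d := by
  induction h with
  | refl => exact ha
  | tail _ hstep ih => exact hd _ ih _ hstep.2.1 hstep.2.2

def PreconnectedWithin (G : SimpleGraph V) (s : Set V) : Prop :=
  ∀ a ∈ s, ∀ b ∈ s, reachWithin G s a b

theorem PreconnectedWithin.insert_of_adj (hs : PreconnectedWithin G s) (hz : z ∈ s)
    (hyz : G.Adj y z) :
    PreconnectedWithin G (insert y s) := by
  have hreach : ∀ w ∈ insert y s, reachWithin G (insert y s) z w := by
    rintro w (rfl | hw)
    · exact .single ⟨.inr hz, .inl rfl, hyz.symm⟩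
    · exact (hs z hz w hw).mono (Set.subset_insert _ _)
  exact fun a ha b hb => (hreach a ha).symm.trans (hreach b hb)

end Reach

namespace RTree

variable {G : SimpleGraph V} {T : RTree V} {a b c p u v w x y z : V} {i n : ℕ}

theorem pIter_add (T : RTree V) (m n : ℕ) (w : V) :
    T.pIter (m + n) w = (T.pIter m w).bind (T.pIter n) := by
  induction m generalizing w with
  | zero => simp [pIter]
  | succ m ih =>
    rw [Nat.add_right_comm]
    simp only [pIter]
    cases T.parent w <;> simp [ih]

theorem pIter_one (T : RTree V) (w : V) : T.pIter 1 w = T.parent w := by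
  cases h : T.parent w <;> simp [pIter, h]

theorem isAncestor_iff_pIter : T.isAncestor u w ↔ ∃ n, T.pIter n w = some u := by
  constructor
  · intro h
    induction h using Relation.ReflTransGen.head_induction_on with
    | refl => exact ⟨0, rfl⟩
    | head hstep _ ih =>
      obtain ⟨n, hn⟩ := ih
      exact ⟨n + 1, by simp only [pIter, show T.parent _ = _ from hstep]; exact hn⟩
  · rintro ⟨n, hn⟩
    induction n generalizing w with
    | zero => cases Option.some_injective _ hn; exact .refl
    | succ n ih =>
      simp only [pIter] at hn
      cases hp : T.parent w with
      | none => simp [hp] at hn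
      | some p => exact .head hp (ih (by simpa [hp] using hn))

theorem isAncestor_total (h₁ : T.isAncestor a w) (h₂ : T.isAncestor b w) :
    T.isAncestor a b ∨ T.isAncestor b a :=
  (Relation.ReflTransGen.total_of_right_unique
    (fun _ _ _ h h' => Option.some_injective _ (h.symm.trans h')) h₁ h₂).symm

theorem exists_parent_of_isAncestor (h : T.isAncestor u w) (hne : u ≠ w) :
    ∃ p, T.parent w = some p ∧ T.isAncestor u p := by
  rcases Relation.ReflTransGen.cases_head h with rfl | ⟨p, hp, hpu⟩
  · exact absurd rfl hne
  · exact ⟨p, hp, hpu⟩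

theorem exists_child_of_isAncestor (h : T.isAncestor u w) (hne : u ≠ w) :
    ∃ c, T.parent c = some u ∧ T.isAncestor c w := by
  rcases Relation.ReflTransGen.cases_tail h with rfl | ⟨c, hwc, hc⟩
  · exact absurd rfl hne
  · exact ⟨c, hc, hwc⟩

theorem descendants_subset (h : T.isAncestor u w) : T.descendants w ⊆ T.descendants u :=
  fun _ hz => ⟨hz.1, hz.2.trans h⟩

namespace WF

variable (hwf : T.WF)
include hwf

theorem root_mem : T.root ∈ T.supp := hwf.1

theorem parent_root : T.parent T.root = none := hwf.2.1

theorem isAncestor_root (hw : w ∈ T.supp) : T.isAncestor T.root w := hwf.2.2.2.2 w hw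

theorem mem_of_parent (h : T.parent w = some p) : w ∈ T.supp := by
  by_contra hw
  simp [hwf.2.2.1 w hw] at h

theorem parent_mem (h : T.parent w = some p) : p ∈ T.supp := by
  obtain ⟨q, hq, hwq⟩ := hwf.2.2.2.1 w (hwf.mem_of_parent h)
    (by rintro rfl; simp [hwf.parent_root] at h)
  rw [h, Option.some_inj] at hwq
  exact hwq ▸ hq

theorem ne_root_of_parent (h : T.parent w = some p) : w ≠ T.root := by
  rintro rfl
  simp [hwf.parent_root] at h

theorem mem_of_isAncestor (h : T.isAncestor u w) (hw : w ∈ T.supp) : u ∈ T.supp := by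
  induction h with
  | refl => exact hw
  | tail _ hstep _ => exact hwf.parent_mem hstep

theorem eq_root_of_isAncestor_root (h : T.isAncestor u T.root) : u = T.root := by
  rcases Relation.ReflTransGen.cases_head h with rfl | ⟨p, hp, _⟩
  · rfl
  · simp [parentRel, hwf.parent_root] at hp

theorem descendants_root : T.descendants T.root = T.supp :=
  Set.ext fun _ => ⟨And.left, fun hw => ⟨hw, hwf.isAncestor_root hw⟩⟩

theorem pIter_depthOf (hw : w ∈ T.supp) : T.pIter (T.depthOf w) w = some T.root :=
  Nat.sInf_mem (isAncestor_iff_pIter.1 (hwf.isAncestor_root hw))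

/-- Every vertex reaches the root, which has no parent: so no vertex lies on a cycle. -/
theorem eq_zero_of_pIter_self (hw : w ∈ T.supp) (h : T.pIter n w = some w) : n = 0 := by
  obtain _ | m := n
  · rfl
  have hroot := hwf.pIter_depthOf hw
  have key : T.pIter (m + 1 + T.depthOf w) w = some T.root := by simpa [pIter_add, h] using hroot
  rw [Nat.add_comm, pIter_add, hroot] at key
  simp [pIter, hwf.parent_root] at key

theorem isAncestor_antisymm (hw : w ∈ T.supp) (h₁ : T.isAncestor u w)
    (h₂ : T.isAncestor w u) : u = w := by
  obtain ⟨m, hm⟩ := isAncestor_iff_pIter.1 h₁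
  obtain ⟨n, hn⟩ := isAncestor_iff_pIter.1 h₂
  have : m + n = 0 := hwf.eq_zero_of_pIter_self hw (by simpa [pIter_add, hm] using hn)
  simpa [show m = 0 by omega, pIter] using hm.symm

theorem parent_ne (h : T.parent w = some p) : p ≠ w := by
  rintro rfl
  exact absurd (hwf.eq_zero_of_pIter_self (hwf.mem_of_parent h) (by rwa [pIter_one])) one_ne_zero

theorem root_notMem_descendants (h : T.parent c = some p) : T.root ∉ T.descendants c :=
  fun hr => hwf.ne_root_of_parent h (hwf.eq_root_of_isAncestor_root hr.2)

theorem mem_descendants_or_isAncestor_parent (hc : T.parent c = some p)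
    (hz : z ∈ T.descendants c) (hy : T.isAncestor y z) :
    y ∈ T.descendants c ∨ T.isAncestor y p := by
  rcases isAncestor_total hy hz.2 with hyc | hcy
  · by_cases hyc' : y = c
    · subst hyc'
      exact .inl ⟨hwf.mem_of_parent hc, .refl⟩
    · obtain ⟨p', hp', hyp⟩ := exists_parent_of_isAncestor hyc hyc'
      rw [hc, Option.some_inj] at hp'
      exact .inr (hp' ▸ hyp)
  · exact .inl ⟨hwf.mem_of_isAncestor hy hz.1, hcy⟩

section AncAt

variable (hv : v ∈ T.supp)
include hv

theorem pIter_ancAt (hi : i ≤ T.depthOf v) :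
    T.pIter (T.depthOf v - i) v = some (T.ancAt v i) := by
  have h := hwf.pIter_depthOf hv
  rw [show T.depthOf v = T.depthOf v - i + i by omega, pIter_add] at h
  unfold ancAt
  cases hz : T.pIter (T.depthOf v - i) v with
  | none => simp [hz] at h
  | some z => rfl

theorem isAncestor_ancAt (hi : i ≤ T.depthOf v) : T.isAncestor (T.ancAt v i) v :=
  isAncestor_iff_pIter.2 ⟨_, hwf.pIter_ancAt hv hi⟩

theorem ancAt_zero : T.ancAt v 0 = T.root := by
  have h := hwf.pIter_ancAt hv (Nat.zero_le _)
  rw [Nat.sub_zero, hwf.pIter_depthOf hv, Option.some_inj] at h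
  exact h.symm

theorem parent_ancAt_succ (hi : i + 1 ≤ T.depthOf v) :
    T.parent (T.ancAt v (i + 1)) = some (T.ancAt v i) := by
  have h := hwf.pIter_ancAt hv (i := i) (by omega)
  rw [show T.depthOf v - i = T.depthOf v - (i + 1) + 1 by omega, pIter_add,
    hwf.pIter_ancAt hv hi] at h
  simpa [pIter_one] using h

end AncAt

theorem isAncestor_subtreeAt (hu : u ∈ T.descendants c) (h : T.isAncestor u w) :
    (T.subtreeAt c).isAncestor u w := by
  induction h using Relation.ReflTransGen.head_induction_on with
  | refl => exact .refl
  | @head z y hzy hyu ih =>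
    have hcy : T.isAncestor c y := hyu.trans hu.2
    have hzc : z ≠ c := by
      rintro rfl
      exact hwf.parent_ne hzy (hwf.isAncestor_antisymm (hwf.mem_of_parent hzy) (.single hzy) hcy)
    have hz : z ∈ T.descendants c := ⟨hwf.mem_of_parent hzy, hcy.head hzy⟩
    refine .head ?_ ih
    simpa [parentRel, subtreeAt, hzc, hz] using hzy

theorem subtreeAt (hc : c ∈ T.supp) : (T.subtreeAt c).WF := by
  refine ⟨⟨hc, .refl⟩, by simp [RTree.subtreeAt], fun w hw => ?_, fun w hw hwc => ?_,
    fun w hw => hwf.isAncestor_subtreeAt ⟨hc, .refl⟩ hw.2⟩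
  · simp [RTree.subtreeAt, show w ∉ T.descendants c from hw]
  · obtain ⟨p, hp, hcp⟩ := exists_parent_of_isAncestor hw.2 (Ne.symm hwc)
    refine ⟨p, ⟨hwf.parent_mem hp, hcp⟩, ?_⟩
    simpa [RTree.subtreeAt, show w ≠ c from hwc, show w ∈ T.descendants c from hw] using hp

theorem descendants_subtreeAt (hu : u ∈ T.descendants c) :
    (T.subtreeAt c).descendants u = T.descendants u := by
  ext w
  refine ⟨fun ⟨hw, h⟩ => ⟨hw.1, ?_⟩,
    fun ⟨hw, h⟩ => ⟨⟨hw, h.trans hu.2⟩, hwf.isAncestor_subtreeAt hu h⟩⟩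
  refine Relation.ReflTransGen.mono (fun z y hzy => ?_) _ _ h
  simp only [parentRel, RTree.subtreeAt] at hzy
  split_ifs at hzy
  exact hzy

end WF

theorem isAncestor_of_subtreeAt (h : (T.subtreeAt c).isAncestor u w) : T.isAncestor u w := by
  refine Relation.ReflTransGen.mono (fun z y hzy => ?_) _ _ h
  simp only [parentRel, RTree.subtreeAt] at hzy
  split_ifs at hzy
  exact hzy

/-- The non-recursive form of `IsSearchTreeRec`. -/
structure IsFlatSearchTree (G : SimpleGraph V) (T : RTree V) : Prop where
  wf : T.WF
  preconnected_descendants : ∀ u ∈ T.supp, PreconnectedWithin G (T.descendants u)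
  isAncestor_or_of_adj :
    ∀ a ∈ T.supp, ∀ b ∈ T.supp, G.Adj a b → T.isAncestor a b ∨ T.isAncestor b a

theorem _root_.IsSearchTreeRec.isFlatSearchTree (h : IsSearchTreeRec G T) :
    T.IsFlatSearchTree G := by
  induction h with
  | intro T hwf hconn hcomp _ ih =>
  have below_child : ∀ w ∈ T.supp, w ≠ T.root →
      ∃ c, T.parent c = some T.root ∧ w ∈ T.descendants c := fun w hw hwr =>
    (exists_child_of_isAncestor (hwf.isAncestor_root hw) (Ne.symm hwr)).imp
      fun _ ⟨hc, hcw⟩ => ⟨hc, hw, hcw⟩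
  refine ⟨hwf, fun u hu => ?_, fun a ha b hb hab => ?_⟩
  · by_cases hur : u = T.root
    · rw [hur, hwf.descendants_root]
      exact hconn
    · obtain ⟨c, hc, huc⟩ := below_child u hu hur
      rw [← hwf.descendants_subtreeAt huc]
      exact (ih c hc).preconnected_descendants u huc
  · by_cases har : a = T.root
    · exact .inl (har ▸ hwf.isAncestor_root hb)
    by_cases hbr : b = T.root
    · exact .inr (hbr ▸ hwf.isAncestor_root ha)
    obtain ⟨c, hc, hac⟩ := below_child a ha har
    have hbc : b ∈ T.descendants c := (hcomp c hc b).2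
      ⟨hb, hbr, ((hcomp c hc a).1 hac).2.2.tail ⟨⟨ha, har⟩, ⟨hb, hbr⟩, hab⟩⟩
    exact ((ih c hc).isAncestor_or_of_adj a hac b hbc hab).imp
      isAncestor_of_subtreeAt isAncestor_of_subtreeAt

namespace IsFlatSearchTree

variable (hT : T.IsFlatSearchTree G)
include hT

theorem mem_descendants_or_isAncestor_parent_of_adj (hc : T.parent c = some p)
    (hz : z ∈ T.descendants c) (hy : y ∈ T.supp) (hzy : G.Adj z y) :
    y ∈ T.descendants c ∨ T.isAncestor y p := by
  rcases hT.isAncestor_or_of_adj z hz.1 y hy hzy with hzy' | hyz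
  · exact .inl ⟨hy, hzy'.trans hz.2⟩
  · exact hT.wf.mem_descendants_or_isAncestor_parent hc hz hyz

theorem exists_adj_of_parent (hb : T.parent b = some a) : ∃ z ∈ T.descendants b, G.Adj a z := by
  have hwf := hT.wf
  have ha := hwf.parent_mem hb
  by_contra! hno
  have hclosed : ∀ z ∈ T.descendants b, ∀ y ∈ T.descendants a, G.Adj z y →
      y ∈ T.descendants b := by
    intro z hz y hy hzy
    refine (hT.mem_descendants_or_isAncestor_parent_of_adj hb hz hy.1 hzy).resolve_right
      fun hya => hno z hz ?_
    rw [← hwf.isAncestor_antisymm ha hya hy.2]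
    exact hzy.symm
  have hab : a ∈ T.descendants b :=
    reachWithin.mem_of_closed hclosed ⟨hwf.mem_of_parent hb, .refl⟩
      (hT.preconnected_descendants a ha b ⟨hwf.mem_of_parent hb, .single hb⟩ a ⟨ha, .refl⟩)
  exact hwf.parent_ne hb (hwf.isAncestor_antisymm (hwf.mem_of_parent hb) (.single hb) hab.2)

theorem mem_descendants_child_root_iff (hc : T.parent c = some T.root) :
    w ∈ T.descendants c ↔
      w ∈ T.supp ∧ w ≠ T.root ∧ reachWithin G (T.supp \ {T.root}) c w := by
  have hwf := hT.wf
  have hsub : T.descendants c ⊆ T.supp \ {T.root} := fun z hz =>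
    ⟨hz.1, fun hzr => hwf.root_notMem_descendants hc (hzr ▸ hz)⟩
  refine ⟨fun hw => ⟨hw.1, (hsub hw).2, ?_⟩, fun ⟨_, _, hreach⟩ => ?_⟩
  · have hcc : c ∈ T.descendants c := ⟨hwf.mem_of_parent hc, .refl⟩
    exact (hT.preconnected_descendants c hcc.1 c hcc w hw).mono hsub
  · refine hreach.mem_of_closed (fun z hz y hy hzy => ?_) ⟨hwf.mem_of_parent hc, .refl⟩
    exact (hT.mem_descendants_or_isAncestor_parent_of_adj hc hz hy.1 hzy).resolve_right
      fun hyr => hy.2 (hwf.eq_root_of_isAncestor_root hyr)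

theorem subtreeAt (hc : c ∈ T.supp) : (T.subtreeAt c).IsFlatSearchTree G where
  wf := hT.wf.subtreeAt hc
  preconnected_descendants u hu := by
    rw [hT.wf.descendants_subtreeAt hu]
    exact hT.preconnected_descendants u hu.1
  isAncestor_or_of_adj a ha b hb hab := (hT.isAncestor_or_of_adj a ha.1 b hb.1 hab).imp
    (hT.wf.isAncestor_subtreeAt ha) (hT.wf.isAncestor_subtreeAt hb)

omit hT in
theorem isSearchTreeRec [Finite V] (hT : T.IsFlatSearchTree G) : IsSearchTreeRec G T := by
  induction hn : T.supp.ncard using Nat.strong_induction_on generalizing T with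
  | _ n ih =>
  have hwf := hT.wf
  refine .intro T hwf ?_ (fun c hc w => hT.mem_descendants_child_root_iff hc) fun c hc => ?_
  · have hroot := hT.preconnected_descendants _ hwf.root_mem
    rw [hwf.descendants_root] at hroot
    exact hroot
  · have hlt : T.descendants c ⊂ T.supp := (Set.ssubset_iff_of_subset fun _ hz => hz.1).2
      ⟨T.root, hwf.root_mem, hwf.root_notMem_descendants hc⟩
    exact ih _ (hn ▸ Set.ncard_lt_ncard hlt) (hT.subtreeAt (hwf.mem_of_parent hc)) rfl

end IsFlatSearchTree

noncomputable def insertAbove (T : RTree V) (a x : V) : RTree V where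
  supp := insert x T.supp
  root := if a = T.root then x else T.root
  parent w := if w = x then T.parent a else if w = a then some x else T.parent w

theorem insertAbove_parent_self : (T.insertAbove a x).parent x = T.parent a := by
  simp [insertAbove]

theorem isAncestor_insertAbove_self : (T.insertAbove a x).isAncestor x a := by
  by_cases hax : a = x
  · exact hax ▸ .refl
  · exact .single (by simp [insertAbove, parentRel, hax])

theorem insertAbove_parent_of_ne (hwx : w ≠ x) (hwa : w ≠ a) :
    (T.insertAbove a x).parent w = T.parent w := by
  simp [insertAbove, hwx, hwa]

namespace WF

variable (hwf : T.WF) (hx : x ∉ T.supp)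
include hwf hx

theorem isAncestor_insertAbove (h : T.isAncestor u w) : (T.insertAbove a x).isAncestor u w := by
  refine Relation.ReflTransGen.lift' id (fun z y hzy => ?_) _ _ h
  have hzx : z ≠ x := fun hzx => hx (hzx ▸ hwf.mem_of_parent hzy)
  by_cases hza : z = a
  · subst hza
    exact .head (show (T.insertAbove z x).parentRel z x by simp [insertAbove, parentRel, hzx])
      (.single (by simpa [insertAbove, parentRel] using hzy))
  · exact .single (by simpa [parentRel, insertAbove_parent_of_ne hzx hza])

theorem isAncestor_of_isAncestor_insertAbove (h : (T.insertAbove a x).isAncestor u w) :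
    T.isAncestor (if u = x then a else u) (if w = x then a else w) := by
  refine Relation.ReflTransGen.lift' (fun z => if z = x then a else z) (fun z y hzy => ?_) _ _ h
  have hyx : ∀ {z}, T.parent z = some y → y ≠ x := fun hzy hyx =>
    hx (hyx ▸ hwf.parent_mem hzy)
  show Relation.ReflTransGen T.parentRel (if z = x then a else z) (if y = x then a else y)
  simp only [parentRel, insertAbove] at hzy
  split_ifs at hzy with hzx hza
  · simpa [hzx, hyx hzy] using Relation.ReflTransGen.single (r := T.parentRel) hzy
  · cases Option.some_injective _ hzy
    rw [if_neg hzx, if_pos rfl, hza]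
  · simpa [hzx, hyx hzy] using Relation.ReflTransGen.single (r := T.parentRel) hzy

theorem descendants_insertAbove_self :
    (T.insertAbove a x).descendants x = insert x (T.descendants a) := by
  ext w
  constructor
  · rintro ⟨hw, h⟩
    have := hwf.isAncestor_of_isAncestor_insertAbove hx h
    rcases hw with rfl | hw
    · exact .inl rfl
    · exact .inr ⟨hw, by simpa [show w ≠ x from fun h => hx (h ▸ hw)] using this⟩
  · rintro (rfl | ⟨hw, h⟩)
    · exact ⟨.inl rfl, .refl⟩
    · exact ⟨.inr hw, (hwf.isAncestor_insertAbove hx h).trans isAncestor_insertAbove_self⟩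

theorem descendants_insertAbove_of_mem (hu : u ∈ T.supp) :
    (T.insertAbove a x).descendants u = T.descendants u ∨
      ((T.insertAbove a x).descendants u = insert x (T.descendants u) ∧ T.isAncestor u a) := by
  have hux : u ≠ x := fun h => hx (h ▸ hu)
  have hsub : T.descendants u ⊆ (T.insertAbove a x).descendants u := fun w hw =>
    ⟨.inr hw.1, hwf.isAncestor_insertAbove hx hw.2⟩
  have hsup : (T.insertAbove a x).descendants u ⊆ insert x (T.descendants u) := by
    rintro w ⟨hw, h⟩
    rcases hw with rfl | hw
    · exact .inl rfl
    · have hwx : w ≠ x := fun h => hx (h ▸ hw)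
      exact .inr ⟨hw, by simpa [hux, hwx] using hwf.isAncestor_of_isAncestor_insertAbove hx h⟩
  by_cases hxu : x ∈ (T.insertAbove a x).descendants u
  · refine .inr ⟨hsup.antisymm (Set.insert_subset hxu hsub), ?_⟩
    simpa [hux] using hwf.isAncestor_of_isAncestor_insertAbove hx hxu.2
  · exact .inl (((Set.subset_insert_iff_of_notMem hxu).1 hsup).antisymm hsub)

theorem isAncestor_insertAbove_or (hz : T.isAncestor z a ∨ T.isAncestor a z) :
    (T.insertAbove a x).isAncestor z x ∨ (T.insertAbove a x).isAncestor x z := by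
  rcases hz with hza | haz
  · by_cases heq : z = a
    · exact .inr (heq ▸ isAncestor_insertAbove_self)
    obtain ⟨p, hp, hzp⟩ := exists_parent_of_isAncestor hza heq
    exact .inl (.head (by simpa [parentRel, insertAbove_parent_self])
      (hwf.isAncestor_insertAbove hx hzp))
  · exact .inr ((hwf.isAncestor_insertAbove hx haz).trans isAncestor_insertAbove_self)

theorem insertAbove (ha : a ∈ T.supp) : (T.insertAbove a x).WF := by
  have hax : a ≠ x := fun h => hx (h ▸ ha)
  have hrx : T.root ≠ x := fun h => hx (h ▸ hwf.root_mem)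
  have hroot : (T.insertAbove a x).isAncestor (T.insertAbove a x).root T.root ∧
      (T.insertAbove a x).isAncestor (T.insertAbove a x).root x := by
    by_cases har : a = T.root
    · simp only [RTree.insertAbove, har, if_true]
      exact ⟨har ▸ isAncestor_insertAbove_self, .refl⟩
    · obtain ⟨p, hp, hap⟩ := hwf.2.2.2.1 a ha har
      simp only [RTree.insertAbove, har, if_false]
      exact ⟨.refl, .head (by simp [parentRel, hap])
        (hwf.isAncestor_insertAbove hx (hwf.isAncestor_root hp))⟩
  refine ⟨?_, ?_, fun w hw => ?_, fun w hw hwr => ?_, ?_⟩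
  · by_cases har : a = T.root <;> simp [RTree.insertAbove, har, hwf.root_mem]
  · by_cases har : a = T.root
    · simp [RTree.insertAbove, har, hwf.parent_root]
    · simp [RTree.insertAbove, har, hrx, Ne.symm har, hwf.parent_root]
  · have hw' : w ∉ T.supp := fun h => hw (.inr h)
    rw [insertAbove_parent_of_ne (fun h => hw (.inl h)) (fun h => hw' (h ▸ ha))]
    exact hwf.2.2.1 w hw'
  · rcases hw with rfl | hw
    · have har : a ≠ T.root := fun h => hwr (by simp [RTree.insertAbove, h])
      obtain ⟨p, hp, hap⟩ := hwf.2.2.2.1 a ha har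
      exact ⟨p, .inr hp, by rw [insertAbove_parent_self, hap]⟩
    by_cases hwa : w = a
    · exact ⟨x, .inl rfl, by simp [RTree.insertAbove, hwa, hax]⟩
    have hwr' : w ≠ T.root := fun h => hwr (by
      rw [h]; simp [RTree.insertAbove, show a ≠ T.root from fun h' => hwa (h.trans h'.symm)])
    obtain ⟨p, hp, hwp⟩ := hwf.2.2.2.1 w hw hwr'
    have hwx : w ≠ x := fun h => hx (h ▸ hw)
    exact ⟨p, .inr hp, by rw [insertAbove_parent_of_ne hwx hwa, hwp]⟩
  · rintro w (rfl | hw)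
    · exact hroot.2
    · exact (hwf.isAncestor_insertAbove hx (hwf.isAncestor_root hw)).trans hroot.1

/-- The only child of `x` in `T.insertAbove b x` is `b`, and `T|b` contains a neighbour of `a`,
so the `ax`-rotation hangs `b` back below `a`. -/
theorem rotate_insertAbove (hb : T.parent b = some a)
    (hnbr : ∃ z ∈ T.descendants b, G.Adj a z) :
    rotate G (T.insertAbove b x) a x = T.insertAbove a x := by
  have hab : a ≠ b := hwf.parent_ne hb
  have hax : a ≠ x := fun h => hx (h ▸ hwf.parent_mem hb)
  have hbx : b ≠ x := fun h => hx (h ▸ hwf.mem_of_parent hb)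
  have hbr : b ≠ T.root := hwf.ne_root_of_parent hb
  have hnbr' : ∃ z ∈ (T.insertAbove b x).descendants b, G.Adj a z :=
    let ⟨z, hz, haz⟩ := hnbr
    ⟨z, ⟨.inr hz.1, hwf.isAncestor_insertAbove hx hz.2⟩, haz⟩
  have hnx : ∀ w, T.parent w ≠ some x := fun w h => hx (hwf.parent_mem h)
  simp only [rotate, RTree.insertAbove, mk.injEq, true_and]
  refine ⟨by simp [hbr, eq_comm], funext fun w => ?_⟩
  by_cases hwx : w = x
  · simp [hwx, hax, hab]
  by_cases hwa : w = a
  · simp [hwa, hax]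
  by_cases hwb : w = b
  · subst hwb
    simp only [RTree.insertAbove] at hnbr'
    simp only [hwx, hwa, if_false, if_true]
    exact (if_pos hnbr').trans hb.symm
  · simp [hwx, hwa, hwb, hnx]

theorem rotAdj_insertAbove (hb : T.parent b = some a)
    (hnbr : ∃ z ∈ T.descendants b, G.Adj a z) :
    rotAdj G (T.insertAbove a x) (T.insertAbove b x) := by
  have hab : b ≠ a := (hwf.parent_ne hb).symm
  have hbx : b ≠ x := fun h => hx (h ▸ hwf.mem_of_parent hb)
  have hax : a ≠ x := fun h => hx (h ▸ hwf.parent_mem hb)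
  refine ⟨fun h => hax ?_, .inr ⟨a, x, by rw [insertAbove_parent_self, hb],
    (hwf.rotate_insertAbove hx hb hnbr).symm⟩⟩
  simpa [RTree.insertAbove, hbx, hab, hb] using congrArg (fun T' : RTree V => T'.parent b) h

omit hx in
theorem insertAt_eq_insertAbove (hv : v ∈ T.supp) (hi : i ≤ T.depthOf v) :
    T.insertAt i x v = T.insertAbove (T.ancAt v i) x := by
  cases i with
  | zero => simp [insertAt, RTree.insertAbove, hwf.ancAt_zero hv, hwf.parent_root]
  | succ i =>
    have hp := hwf.parent_ancAt_succ hv hi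
    simp [insertAt, RTree.insertAbove, hp, hwf.ne_root_of_parent hp,
      show i ≠ T.depthOf v by omega]

end WF

theorem IsFlatSearchTree.insertAbove (hT : T.IsFlatSearchTree G) (ha : a ∈ T.supp)
    (hx : x ∉ T.supp) (hnbr : ∃ z ∈ T.descendants a, G.Adj x z)
    (hcomp : ∀ z ∈ T.supp, G.Adj x z → T.isAncestor z a ∨ T.isAncestor a z) :
    (T.insertAbove a x).IsFlatSearchTree G where
  wf := hT.wf.insertAbove hx ha
  preconnected_descendants u hu := by
    obtain ⟨z, hz, hxz⟩ := hnbr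
    rcases hu with rfl | hu
    · rw [hT.wf.descendants_insertAbove_self hx]
      exact (hT.preconnected_descendants a ha).insert_of_adj hz hxz
    rcases hT.wf.descendants_insertAbove_of_mem hx hu with h | ⟨h, hua⟩ <;> rw [h]
    · exact hT.preconnected_descendants u hu
    · exact (hT.preconnected_descendants u hu).insert_of_adj (descendants_subset hua hz) hxz
  isAncestor_or_of_adj := by
    rintro a' (rfl | ha') b' (rfl | hb') hab
    · exact absurd rfl hab.ne
    · exact (hT.wf.isAncestor_insertAbove_or hx (hcomp b' hb' hab)).symm
    · exact hT.wf.isAncestor_insertAbove_or hx (hcomp a' ha' hab.symm)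
    · exact (hT.isAncestor_or_of_adj a' ha' b' hb' hab).imp
        (hT.wf.isAncestor_insertAbove hx) (hT.wf.isAncestor_insertAbove hx)

end RTree

theorem insertAt_path_in_rotationGraph_general {V : Type u} [Fintype V] (G' : SimpleGraph V)
    (x v : V) (hxv : x ≠ v)
    (hN : ∀ z : V, (z = x ∨ G'.Adj x z) → (z = v ∨ G'.Adj v z))
    (T : RTree V) (hT : IsSearchTreeOn G' {x}ᶜ T) :
    (∀ i ≤ T.depthOf v, IsSearchTree G' (T.insertAt i x v))
    ∧ (∀ i < T.depthOf v, rotAdj G' (T.insertAt i x v) (T.insertAt (i + 1) x v)) := by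
  obtain ⟨hsupp, hrec⟩ := hT
  have hT := hrec.isFlatSearchTree
  have hwf := hT.wf
  have hx : x ∉ T.supp := by simp [hsupp]
  have hv : v ∈ T.supp := by simpa [hsupp] using hxv.symm
  have hvx : G'.Adj v x := (hN x (.inl rfl)).resolve_left hxv
  refine ⟨fun i hi => ⟨?_, ?_⟩, fun i hi => ?_⟩
  · simp [hwf.insertAt_eq_insertAbove hv hi, RTree.insertAbove, hsupp, Set.insert_eq]
  · have hav := hwf.isAncestor_ancAt hv hi
    rw [hwf.insertAt_eq_insertAbove hv hi]
    refine (hT.insertAbove (hwf.mem_of_isAncestor hav hv) hx ⟨v, ⟨hv, hav⟩, hvx.symm⟩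
      fun z hz hxz => ?_).isSearchTreeRec
    -- `N[x] ⊆ N[v]`: every neighbour of `x` is comparable with `v`, hence with its ancestor
    rcases hN z (.inr hxz) with rfl | hvz
    · exact .inr hav
    rcases hT.isAncestor_or_of_adj z hz v hv hvz.symm with hzv | hvz'
    · exact RTree.isAncestor_total hzv hav
    · exact .inr (hvz'.trans hav)
  · rw [hwf.insertAt_eq_insertAbove hv hi.le, hwf.insertAt_eq_insertAbove hv hi]
    have hp := hwf.parent_ancAt_succ hv hi
    exact hwf.rotAdj_insertAbove hx hp (hT.exists_adj_of_parent hp)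

/-- the search trees `T(0,x,v), …, T(d_{T,v},x,v)` lie on a path in the
rotation graph `R(G')`: they are all search trees on `G'` and consecutive ones differ by
a single rotation. -/
theorem insertAt_path_in_rotationGraph {V : Type u} [Fintype V] (G' : SimpleGraph V)
    (hG' : G'.Connected) (x v : V) (hxv : x ≠ v)
    (hN : ∀ z : V, (z = x ∨ G'.Adj x z) → (z = v ∨ G'.Adj v z))
    (T : RTree V) (hT : IsSearchTreeOn G' {x}ᶜ T) :
    (∀ i ≤ T.depthOf v, IsSearchTree G' (T.insertAt i x v))
    ∧ (∀ i < T.depthOf v, rotAdj G' (T.insertAt i x v) (T.insertAt (i + 1) x v)) :=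
  insertAt_path_in_rotationGraph_general G' x v hxv hN T hT
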